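/- arXiv:1708.03313 — 2 statements merged into one kernel-verified Lean document; each statement's English description precedes it below -/
import Mathlib

section
/- The function R_H(s,t) = (1/2)(s^{2H} + t^{2H} - |t-s|^{2H}), for 0 < H < 1, is a positive semidefinite kernel on [0,∞) × [0,∞): for all finite sequences t_1,…,t_n ≥ 0 and real c_1,…,c_n, one has Σ_{j,k} c_j c_k R_H(t_j, t_k) ≥ 0. -/
open MeasureTheory Real Set

lemma fBm_aux_contOn (a p : ℝ) {s : Set ℝ} (hs : ∀ x ∈ s, x ≠ 0) :
    ContinuousOn (fun u : ℝ => (1 - Real.cos (a * u)) * u ^ (-1 - p)) s :=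
  ((continuous_const.sub (Real.continuous_cos.comp (continuous_const.mul
    continuous_id))).continuousOn).mul
    (continuousOn_id.rpow_const fun x hx => Or.inl (hs x hx))

/-- Integrability of `(1 - cos (a u)) u^(-1-p)` on `(0, ∞)` for `0 < p < 2`. -/
lemma fBm_aux_integrable (p : ℝ) (hp0 : 0 < p) (hp2 : p < 2) (a : ℝ) :
    IntegrableOn (fun u : ℝ => (1 - Real.cos (a * u)) * u ^ (-1 - p)) (Ioi 0) := by
  have h01 : IntegrableOn (fun u : ℝ => (1 - Real.cos (a * u)) * u ^ (-1 - p)) (Ioc 0 1) := by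
    have hg : IntegrableOn (fun u : ℝ => (a ^ 2 / 2) * u ^ (1 - p)) (Ioc 0 1) := by
      have h2 : IntegrableOn (fun u : ℝ => u ^ (1 - p)) (Ioo 0 2) :=
        (intervalIntegral.integrableOn_Ioo_rpow_iff zero_lt_two).2 (by linarith)
      exact (h2.mono_set (fun x hx => ⟨hx.1, lt_of_le_of_lt hx.2 one_lt_two⟩)).const_mul _
    refine Integrable.mono' hg ((fBm_aux_contOn a p
      (fun x (hx : x ∈ Ioc (0:ℝ) 1) => ne_of_gt hx.1)).aestronglyMeasurable
        measurableSet_Ioc) ?_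
    filter_upwards [ae_restrict_mem measurableSet_Ioc] with u hu
    have hu0 : 0 < u := hu.1
    have h1 : 0 ≤ 1 - Real.cos (a * u) := by
      have := Real.cos_le_one (a * u); linarith
    have h2 : (0:ℝ) ≤ u ^ (-1 - p) := Real.rpow_nonneg hu0.le _
    rw [Real.norm_eq_abs, abs_of_nonneg (mul_nonneg h1 h2)]
    have hcos : 1 - Real.cos (a * u) ≤ (a * u) ^ 2 / 2 := by
      have := Real.one_sub_sq_div_two_le_cos (x := a * u); linarith
    calc (1 - Real.cos (a * u)) * u ^ (-1 - p) ≤ ((a * u) ^ 2 / 2) * u ^ (-1 - p) :=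
          mul_le_mul_of_nonneg_right hcos h2
      _ = (a ^ 2 / 2) * (u ^ (2:ℝ) * u ^ (-1 - p)) := by rw [Real.rpow_two]; ring
      _ = (a ^ 2 / 2) * u ^ (2 + (-1 - p)) := by rw [Real.rpow_add hu0]
      _ = (a ^ 2 / 2) * u ^ (1 - p) := by rw [show (2:ℝ) + (-1 - p) = 1 - p by ring]
  have h1i : IntegrableOn (fun u : ℝ => (1 - Real.cos (a * u)) * u ^ (-1 - p)) (Ioi 1) := by
    have hg : IntegrableOn (fun u : ℝ => 2 * u ^ (-1 - p)) (Ioi 1) :=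
      ((integrableOn_Ioi_rpow_iff zero_lt_one).2 (by linarith)).const_mul _
    refine Integrable.mono' hg ((fBm_aux_contOn a p
      (fun x (hx : x ∈ Ioi (1:ℝ)) => ne_of_gt (lt_trans zero_lt_one hx))).aestronglyMeasurable
        measurableSet_Ioi) ?_
    filter_upwards [ae_restrict_mem measurableSet_Ioi] with u hu
    have hu0 : (0:ℝ) < u := lt_trans zero_lt_one hu
    have h1 : 0 ≤ 1 - Real.cos (a * u) := by
      have := Real.cos_le_one (a * u); linarith
    have h2 : (0:ℝ) ≤ u ^ (-1 - p) := Real.rpow_nonneg hu0.le _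
    rw [Real.norm_eq_abs, abs_of_nonneg (mul_nonneg h1 h2)]
    have hcos : 1 - Real.cos (a * u) ≤ 2 := by
      have := Real.neg_one_le_cos (a * u); linarith
    exact mul_le_mul_of_nonneg_right hcos h2
  have hU : Ioc (0:ℝ) 1 ∪ Ioi 1 = Ioi 0 := Ioc_union_Ioi_eq_Ioi zero_le_one
  rw [← hU]
  exact h01.union h1i

/-- Scaling: `∫₀^∞ (1 - cos (x u)) u^(-1-p) du = |x|^p ∫₀^∞ (1 - cos v) v^(-1-p) dv`. -/
lemma fBm_aux_scaling (p : ℝ) (hp0 : 0 < p) (x : ℝ) :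
    ∫ u in Ioi (0:ℝ), (1 - Real.cos (x * u)) * u ^ (-1 - p) =
      |x| ^ p * ∫ v in Ioi (0:ℝ), (1 - Real.cos v) * v ^ (-1 - p) := by
  rcases eq_or_ne x 0 with rfl | hx
  · simp [Real.zero_rpow hp0.ne']
  · have hb : 0 < |x| := abs_pos.2 hx
    have hcongr : EqOn (fun u : ℝ => (1 - Real.cos (x * u)) * u ^ (-1 - p))
        (fun u : ℝ => |x| ^ (1 + p) *
          ((1 - Real.cos (|x| * u)) * (|x| * u) ^ (-1 - p))) (Ioi 0) := by
      intro u hu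
      have hu0 : (0:ℝ) < u := hu
      have hcos : Real.cos (x * u) = Real.cos (|x| * u) := by
        rcases abs_choice x with h | h
        · rw [h]
        · rw [h, neg_mul, Real.cos_neg]
      have hpow : |x| ^ (1 + p) * |x| ^ (-1 - p) = 1 := by
        rw [← Real.rpow_add hb, show (1:ℝ) + p + (-1 - p) = 0 by ring, Real.rpow_zero]
      simp only
      rw [hcos, Real.mul_rpow hb.le hu0.le]
      calc (1 - Real.cos (|x| * u)) * u ^ (-1 - p)
          = (|x| ^ (1 + p) * |x| ^ (-1 - p)) * ((1 - Real.cos (|x| * u)) * u ^ (-1 - p)) := by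
            rw [hpow, one_mul]
        _ = |x| ^ (1 + p) * ((1 - Real.cos (|x| * u)) * (|x| ^ (-1 - p) * u ^ (-1 - p))) := by
            ring
    rw [setIntegral_congr_fun measurableSet_Ioi hcongr, integral_const_mul,
      integral_comp_mul_left_Ioi (fun v => (1 - Real.cos v) * v ^ (-1 - p)) 0 hb,
      mul_zero, smul_eq_mul, ← mul_assoc]
    congr 1
    rw [← Real.rpow_neg_one |x|, ← Real.rpow_add hb]
    ring_nf

/-- Positivity of the normalisation constant. -/
lemma fBm_aux_pos (p : ℝ) (hp0 : 0 < p) (hp2 : p < 2) :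
    0 < ∫ v in Ioi (0:ℝ), (1 - Real.cos v) * v ^ (-1 - p) := by
  have hint : IntegrableOn (fun v : ℝ => (1 - Real.cos v) * v ^ (-1 - p)) (Ioi 0) := by
    have := fBm_aux_integrable p hp0 hp2 1
    simpa using this
  have hnn : 0 ≤ᵐ[volume.restrict (Ioi (0:ℝ))]
      fun v : ℝ => (1 - Real.cos v) * v ^ (-1 - p) := by
    filter_upwards [ae_restrict_mem measurableSet_Ioi] with v hv
    have h1 : 0 ≤ 1 - Real.cos v := by have := Real.cos_le_one v; linarith
    exact mul_nonneg h1 (Real.rpow_nonneg (le_of_lt hv) _)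
  rw [setIntegral_pos_iff_support_of_nonneg_ae hnn hint]
  have hsub : Ioo (1:ℝ) 2 ⊆
      Function.support (fun v : ℝ => (1 - Real.cos v) * v ^ (-1 - p)) ∩ Ioi 0 := by
    intro v hv
    have hv0 : (0:ℝ) < v := lt_trans zero_lt_one hv.1
    refine ⟨?_, hv0⟩
    have hvpi : v ≤ Real.pi := le_trans hv.2.le (by linarith [Real.pi_gt_three])
    have hcos : Real.cos v < 1 := by
      have := Real.cos_lt_cos_of_nonneg_of_le_pi le_rfl hvpi hv0
      simpa using this
    have h1 : 0 < 1 - Real.cos v := by linarith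
    have h2 : 0 < v ^ (-1 - p) := Real.rpow_pos_of_pos hv0 _
    exact ne_of_gt (mul_pos h1 h2)
  calc (0:ENNReal) < volume (Ioo (1:ℝ) 2) := by simp [Real.volume_Ioo]
    _ ≤ _ := measure_mono hsub

/-- The covariance kernel `R_H(s,t) = (1/2)(s^{2H} + t^{2H} - |t-s|^{2H})` of
fractional Brownian motion with Hurst parameter `H ∈ (0,1)` is positive
semidefinite on `[0,∞) × [0,∞)`. -/
theorem fBm_kernel_posSemidef (H : ℝ) (hH₀ : 0 < H) (hH₁ : H < 1)
    (n : ℕ) (t : Fin n → ℝ) (ht : ∀ i, 0 ≤ t i) (c : Fin n → ℝ) :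
    0 ≤ ∑ j, ∑ k, c j * c k *
      ((1 / 2) * (t j ^ (2 * H) + t k ^ (2 * H) - |t k - t j| ^ (2 * H))) := by
  have hp0 : 0 < 2 * H := by linarith
  have hp2 : 2 * H < 2 := by linarith
  set p : ℝ := 2 * H with hp
  set I : ℝ := ∫ v in Ioi (0:ℝ), (1 - Real.cos v) * v ^ (-1 - p) with hIdef
  have hIpos : 0 < I := fBm_aux_pos p hp0 hp2
  have hgoal : (∑ j, ∑ k, c j * c k *
        ((1 / 2) * (t j ^ (2 * H) + t k ^ (2 * H) - |t k - t j| ^ (2 * H))))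
      = (1/2) * ∑ j, ∑ k, c j * c k * (t j ^ p + t k ^ p - |t k - t j| ^ p) := by
    rw [Finset.mul_sum]
    refine Finset.sum_congr rfl fun j _ => ?_
    rw [Finset.mul_sum]
    exact Finset.sum_congr rfl fun k _ => by rw [hp]; ring
  rw [hgoal]
  have hS : 0 ≤ ∑ j, ∑ k, c j * c k * (t j ^ p + t k ^ p - |t k - t j| ^ p) := by
    set g : Fin n → Fin n → ℝ → ℝ := fun j k u =>
      c j * c k * (((1 - Real.cos (t j * u)) * u ^ (-1 - p)
        + (1 - Real.cos (t k * u)) * u ^ (-1 - p))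
        - (1 - Real.cos ((t k - t j) * u)) * u ^ (-1 - p)) with hg
    have hgint : ∀ j k : Fin n, IntegrableOn (g j k) (Ioi 0) := fun j k =>
      (((fBm_aux_integrable p hp0 hp2 (t j)).add (fBm_aux_integrable p hp0 hp2 (t k))).sub
        (fBm_aux_integrable p hp0 hp2 (t k - t j))).const_mul _
    have hgval : ∀ j k : Fin n, ∫ u in Ioi (0:ℝ), g j k u
        = (c j * c k * (t j ^ p + t k ^ p - |t k - t j| ^ p)) * I := by
      intro j k
      simp only [hg]
      have hA : IntegrableOn (fun u : ℝ => (1 - Real.cos (t j * u)) * u ^ (-1 - p)) (Ioi 0) :=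
        fBm_aux_integrable p hp0 hp2 (t j)
      have hB : IntegrableOn (fun u : ℝ => (1 - Real.cos (t k * u)) * u ^ (-1 - p)) (Ioi 0) :=
        fBm_aux_integrable p hp0 hp2 (t k)
      have hC : IntegrableOn (fun u : ℝ => (1 - Real.cos ((t k - t j) * u)) * u ^ (-1 - p))
          (Ioi 0) := fBm_aux_integrable p hp0 hp2 (t k - t j)
      have hAB : IntegrableOn (fun u : ℝ => (1 - Real.cos (t j * u)) * u ^ (-1 - p)
          + (1 - Real.cos (t k * u)) * u ^ (-1 - p)) (Ioi 0) := hA.add hB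
      rw [integral_const_mul, integral_sub hAB hC, integral_add hA hB,
        fBm_aux_scaling p hp0 (t j), fBm_aux_scaling p hp0 (t k),
        fBm_aux_scaling p hp0 (t k - t j), abs_of_nonneg (ht j), abs_of_nonneg (ht k)]
      rw [← hIdef]
      ring
    have hsum : ∑ j, ∑ k, (c j * c k * (t j ^ p + t k ^ p - |t k - t j| ^ p)) * I
        = ∫ u in Ioi (0:ℝ), ∑ j, ∑ k, g j k u := by
      rw [integral_finset_sum _ (fun j _ =>
        integrable_finset_sum _ (fun k _ => hgint j k))]
      refine Finset.sum_congr rfl fun j _ => ?_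
      rw [integral_finset_sum _ (fun k _ => hgint j k)]
      exact Finset.sum_congr rfl fun k _ => (hgval j k).symm
    have hptwise : ∀ u ∈ Ioi (0:ℝ), 0 ≤ ∑ j, ∑ k, g j k u := by
      intro u hu
      have hue : (0:ℝ) ≤ u ^ (-1 - p) := Real.rpow_nonneg (le_of_lt hu) _
      have h1 : ∀ j k : Fin n, g j k u =
          (c j * c k - (c j * Real.cos (t j * u)) * c k - c j * (c k * Real.cos (t k * u))
            + (c j * Real.cos (t j * u)) * (c k * Real.cos (t k * u))
            + (c j * Real.sin (t j * u)) * (c k * Real.sin (t k * u))) * u ^ (-1 - p) := by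
        intro j k
        simp only [hg]
        rw [sub_mul (t k) (t j) u, Real.cos_sub]
        ring
      have hid : ∑ j, ∑ k, g j k u =
          (((∑ j, c j) - ∑ j, c j * Real.cos (t j * u)) ^ 2
            + (∑ j, c j * Real.sin (t j * u)) ^ 2) * u ^ (-1 - p) := by
        simp only [h1]
        simp only [Finset.sum_add_distrib, Finset.sum_sub_distrib, ← Finset.sum_mul,
          ← Finset.mul_sum]
        ring
      rw [hid]
      positivity
    have hnonneg : 0 ≤ ∫ u in Ioi (0:ℝ), ∑ j, ∑ k, g j k u :=
      setIntegral_nonneg measurableSet_Ioi hptwise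
    rw [← hsum] at hnonneg
    simp only [← Finset.sum_mul] at hnonneg
    exact (mul_nonneg_iff_of_pos_right hIpos).mp hnonneg
  linarith
end

section
/- For all positive integers m and N, (2mN-1)(2mN-3)···3·1 / (m!)^N ≤ (2N)^{mN}; that is, (2mN-1)!! ≤ (2N)^{mN} (m!)^N. -/
lemma prod_div_add_one (m N : ℕ) :
    ∏ i ∈ Finset.range (m * N), (i / N + 1) = (Nat.factorial m) ^ N := by
  induction m with
  | zero => simp
  | succ m ih =>
    have h : (m + 1) * N = m * N + N := by ring
    rw [h, Finset.prod_range_add, ih]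
    have h2 : ∀ i ∈ Finset.range N, ((m * N + i) / N + 1) = m + 1 := by
      intro i hi
      rcases Nat.eq_zero_or_pos N with hN | hN
      · simp [hN] at hi
      · have : (m * N + i) / N = m := by
          rw [show m * N + i = i + N * m by ring, Nat.add_mul_div_left _ _ hN,
            Nat.div_eq_of_lt (Finset.mem_range.mp hi)]
          omega
        omega
    rw [Finset.prod_congr rfl h2, Finset.prod_const, Finset.card_range,
      Nat.factorial_succ, mul_pow]
    ring
/-- For all positive integers `m` and `N`,
`(2mN-1)!! ≤ (2N)^{mN} (m!)^N`. -/
theorem doubleFactorial_le (m N : ℕ) (hm : 0 < m) (hN : 0 < N) :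
    Nat.doubleFactorial (2 * m * N - 1) ≤ (2 * N) ^ (m * N) * (Nat.factorial m) ^ N := by
  have hmn : 1 ≤ m * N := Nat.one_le_iff_ne_zero.mpr (by positivity)
  have h1 : 2 * m * N - 1 = 2 * (m * N - 1) + 1 := by
    have h0 : 2 * m * N = 2 * (m * N) := by ring
    omega
  rw [h1, Nat.doubleFactorial_eq_prod_odd]
  have h2 : ∏ i ∈ Finset.range (m * N - 1), (2 * (i + 1) + 1)
      ≤ ∏ i ∈ Finset.range (m * N), (2 * i + 1) := by
    have h3 : m * N = (m * N - 1) + 1 := by omega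
    rw [h3, Finset.prod_range_succ']
    simp
  refine h2.trans ?_
  have key : ∏ i ∈ Finset.range (m * N), (2 * i + 1)
      ≤ ∏ i ∈ Finset.range (m * N), (2 * N * (i / N + 1)) := by
    apply Finset.prod_le_prod'
    intro i hi
    have h4 : i < N * (i / N + 1) := Nat.lt_mul_div_succ i hN
    have h5 : 2 * N * (i / N + 1) = 2 * (N * (i / N + 1)) := by ring
    omega
  refine key.trans ?_
  rw [Finset.prod_mul_distrib, Finset.prod_const, Finset.card_range,
    prod_div_add_one]
end
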